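/- arXiv:1006.1363 — 3 statements merged into one kernel-verified Lean document; each statement's English description precedes it below -/
import Mathlib

section
/- Let G be a finite group and let A be a subring of the center Z(ℂ[G]) for which there exists a partition 𝒦 of G such that {K̂ : K ∈ 𝒦} is a ℂ-linear basis of A and {1} ∈ 𝒦. Then A is automatically a Schur ring; that is, the partition 𝒦 also satisfies {g⁻¹ : g ∈ K} ∈ 𝒦 for every K ∈ 𝒦. -/
open scoped Classical

noncomputable section

/-- The set of irreducible complex characters of `G`. -/
def Irr (G : Type) [Group G] : Set (G → ℂ) :=
  {χ | ∃ V : FDRep ℂ G, CategoryTheory.Simple V ∧ FDRep.character V = χ}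

/-- `σ_X = ∑_{ψ ∈ X} ψ(1)·ψ`. -/
def sigmaChar {G : Type} [Group G] (X : Set (G → ℂ)) : G → ℂ :=
  fun g => ∑ᶠ ψ ∈ X, ψ 1 * ψ g

/-- `P` is a set partition of the set `S`. -/
def IsPartitionOf {α : Type*} (S : Set α) (P : Set (Set α)) : Prop :=
  ∅ ∉ P ∧ (∀ p ∈ P, p ⊆ S) ∧ ∀ a ∈ S, ∃! p, p ∈ P ∧ a ∈ p

/-- `(𝒳, 𝒦)` is a supercharacter theory of the finite group `G`. -/
def IsSCT (G : Type) [Group G] [Finite G]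
    (𝒳 : Set (Set (G → ℂ))) (𝒦 : Set (Set G)) : Prop :=
  IsPartitionOf (Irr G) 𝒳 ∧ IsPartitionOf Set.univ 𝒦 ∧ 𝒳.ncard = 𝒦.ncard ∧
    ({1} : Set G) ∈ 𝒦 ∧
    ∀ X ∈ 𝒳, ∀ K ∈ 𝒦, ∀ g ∈ K, ∀ h ∈ K, sigmaChar X g = sigmaChar X h

/-- `K̂ = ∑_{g ∈ K} g ∈ ℂ[G]`. -/
def ghat {G : Type} [Group G] (K : Set G) : MonoidAlgebra ℂ G :=
  ∑ᶠ g ∈ K, MonoidAlgebra.single g (1 : ℂ)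

/-- The central idempotent `e_χ = (χ(1)/|G|) ∑_g conj(χ g)·g` attached to a character. -/
def eIdem (G : Type) [Group G] (χ : G → ℂ) : MonoidAlgebra ℂ G :=
  (χ 1 / (Nat.card G : ℂ)) •
    ∑ᶠ g : G, (starRingEnd ℂ) (χ g) • MonoidAlgebra.single g (1 : ℂ)

/-- `f_X = ∑_{ψ ∈ X} e_ψ`. -/
def fIdem (G : Type) [Group G] (X : Set (G → ℂ)) : MonoidAlgebra ℂ G :=
  ∑ᶠ χ ∈ X, eIdem G χ

/-- Partition order: every part of `P` lies in some part of `Q`. -/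
def PartLE {α : Type*} (P Q : Set (Set α)) : Prop := ∀ p ∈ P, ∃ q ∈ Q, p ⊆ q

/-- The join of two partitions of the same set: parts are connected components of
the relation "lying in a common part of `P` or of `Q`". -/
def PartJoin {α : Type*} (P Q : Set (Set α)) : Set (Set α) :=
  {C | ∃ a ∈ ⋃₀ P, C = {b | Relation.ReflTransGen
      (fun x y => (∃ p ∈ P, x ∈ p ∧ y ∈ p) ∨ ∃ q ∈ Q, x ∈ q ∧ y ∈ q) a b}}

/-- Inner product of complex-valued functions on a finite group. -/
def cInner (H : Type) [Group H] (α β : H → ℂ) : ℂ :=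
  (Nat.card H : ℂ)⁻¹ * ∑ᶠ h : H, α h * (starRingEnd ℂ) (β h)

/-- Restriction of a function on `G` to a subgroup. -/
def resChar {G : Type} [Group G] (H : Subgroup G) (χ : G → ℂ) : ↥H → ℂ := fun h => χ ↑h

/-- Extension by zero of a function on a subgroup. -/
def zeroExtend {G : Type} [Group G] (H : Subgroup G) (φ : ↥H → ℂ) : G → ℂ :=
  fun g => if h : g ∈ H then φ ⟨g, h⟩ else 0

/-- The induced class function `φ^G`. -/
def indChar {G : Type} [Group G] (H : Subgroup G) (φ : ↥H → ℂ) : G → ℂ :=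
  fun g => (Nat.card ↥H : ℂ)⁻¹ * ∑ᶠ x : G, zeroExtend H φ (x⁻¹ * g * x)

/-- The superclass of `x` with respect to a partition `𝒦` of `G`. -/
def sclass {G : Type} [Group G] (𝒦 : Set (Set G)) (x : G) : Set G := ⋃₀ {K ∈ 𝒦 | x ∈ K}

/-- Superinduction: `φ^{(G)}(x) = [G:H]·(1/|[x]|)·∑_{y ∈ [x]} φ⁰(y)`. -/
def superInd {G : Type} [Group G] (𝒦 : Set (Set G)) (H : Subgroup G) (φ : ↥H → ℂ) : G → ℂ :=
  fun x => (H.index : ℂ) * (((sclass 𝒦 x).ncard : ℂ))⁻¹ * ∑ᶠ y ∈ sclass 𝒦 x, zeroExtend H φ y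

/-- A subgroup is `𝒞`-normal when it is a union of superclasses. -/
def CNormal {G : Type} [Group G] (𝒦 : Set (Set G)) (N : Subgroup G) : Prop :=
  ∃ T ⊆ 𝒦, (N : Set G) = ⋃₀ T

/-- `Irr(G/N)` viewed inside `Irr(G)`: irreducible characters with `N` in their kernel. -/
def IrrOver {G : Type} [Group G] (N : Subgroup G) : Set (G → ℂ) :=
  {χ ∈ Irr G | ∀ n ∈ N, χ n = χ 1}

/-- The set of irreducible constituents of the restriction of `θ` to `N`. -/
def constituentsOn {G : Type} [Group G] (N : Subgroup G) (θ : G → ℂ) : Set (↥N → ℂ) :=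
  {ψ ∈ Irr ↥N | cInner ↥N (resChar N θ) ψ ≠ 0}

/-- `Irr(G|ψ)`: irreducible characters of `G` lying over `ψ ∈ Irr(N)`. -/
def irrOverChar {G : Type} [Group G] (N : Subgroup G) (ψ : ↥N → ℂ) : Set (G → ℂ) :=
  {χ ∈ Irr G | cInner ↥N (resChar N χ) ψ ≠ 0}

/-- `X^G = ⋃_{ψ ∈ X} Irr(G|ψ)` for `X ⊆ Irr(N)`. -/
def indSet {G : Type} [Group G] (N : Subgroup G) (X : Set (↥N → ℂ)) : Set (G → ℂ) :=
  ⋃ ψ ∈ X, irrOverChar N ψ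

/-- Conjugation of a normal subgroup by a group element. -/
def conjSub {G : Type} [Group G] {N : Subgroup G} (hN : N.Normal) (g : G) (n : ↥N) : ↥N :=
  ⟨g * ↑n * g⁻¹, hN.conj_mem ↑n n.2 g⟩

/-- The conjugation action of `g ∈ G` on class functions of a normal subgroup `N`. -/
def charConj {G : Type} [Group G] {N : Subgroup G} (hN : N.Normal) (g : G)
    (ψ : ↥N → ℂ) : ↥N → ℂ :=
  fun n => ψ (conjSub hN g⁻¹ n)

/-- Inflation of a set of characters of `G/N` to characters of `G`. -/
def inflateSet {G : Type} [Group G] (N : Subgroup G) [N.Normal]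
    (Y : Set (G ⧸ N → ℂ)) : Set (G → ℂ) :=
  (fun η => η ∘ (QuotientGroup.mk : G → G ⧸ N)) '' Y

/-- Deflation of a set of characters of `G` (with `N` in their kernels) to characters
of `G/N`. -/
def deflate {G : Type} [Group G] (N : Subgroup G) [N.Normal]
    (X : Set (G → ℂ)) : Set (G ⧸ N → ℂ) :=
  (fun χ => fun q : G ⧸ N => χ (Quotient.out q)) '' X

/-- The natural map `M → MN/N ≤ G/N`. -/
def projMN {G : Type} [Group G] (M N : Subgroup G) [N.Normal] (m : ↥M) :
    ↥(M.map (QuotientGroup.mk' N)) :=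
  ⟨QuotientGroup.mk' N ↑m, Subgroup.mem_map_of_mem _ m.2⟩

end

/-!
Let `x*` be the conjugate-linear anti-involution `∑ x_g g ↦ ∑ conj(x_g) g⁻¹` of `ℂ[G]`, so that
`K̂* = (K⁻¹)^`. The coefficient of `1` in `x x*` is `∑ |x_g|²`, so `x x* = 0` forces `x = 0`; for
central `c` this turns `c x = 0` into `c* x = 0` (a normal operator and its adjoint have the same
kernel). Hence the centre is reduced, a central `a` is killed by `∏_{λ ∈ s} (X - λ)` for the set
`s` of roots of its minimal polynomial, and the Lagrange basis `1 = ∑_λ L_λ(a)` together with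
`(a - λ) L_λ(a) = 0` gives `a* = ∑_λ conj λ · L_λ(a)`, a polynomial in `a`. So `A` is closed
under `*`. Coefficients of elements of `A` are constant on the parts of `𝒦`, so `K⁻¹` and `L⁻¹`
are unions of parts, where `L` is the part containing `k⁻¹` for some `k ∈ K`; this forces
`K⁻¹ = L`.
-/

open Polynomial Pointwise

lemma minpoly_eq_nodal {K A : Type*} [Field K] [IsAlgClosed K] [Ring A] [IsReduced A]
    [Algebra K A] {a : A} (ha : IsIntegral K a) :
    minpoly K a = Lagrange.nodal (minpoly K a).roots.toFinset id := by
  have hsep : (minpoly K a).Separable := PerfectField.separable_iff_squarefree.mpr <|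
    (minpoly.isRadical K a).squarefree (minpoly.ne_zero ha)
  rw [Lagrange.nodal_eq, Finset.prod_eq_multiset_prod, Multiset.toFinset_val,
    (nodup_roots hsep).dedup]
  exact (IsAlgClosed.splits _).eq_prod_roots_of_monic (minpoly.monic ha)

lemma Lagrange.nodal_dvd_X_sub_C_mul_basis {F ι : Type*} [Field F] [DecidableEq ι]
    {s : Finset ι} {v : ι → F} {i : ι} (hi : i ∈ s) :
    nodal s v ∣ (X - C (v i)) * Lagrange.basis s v i := by
  rw [basis_eq_prod_sub_inv_mul_nodal_div hi, mul_left_comm,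
    EuclideanDomain.mul_div_cancel' (X_sub_C_ne_zero _) (X_sub_C_dvd_nodal v hi)]
  exact dvd_mul_left _ _

namespace MonoidAlgebra

section Star

variable {R G : Type*} [Semiring R] [StarRing R] [Group G]

noncomputable instance : Star (MonoidAlgebra R G) where
  star x := ofCoeff <| (x.coeff.mapRange star (star_zero R)).equivMapDomain (Equiv.inv G)

@[simp]
lemma coeff_star (x : MonoidAlgebra R G) (g : G) : (star x).coeff g = star (x.coeff g⁻¹) := rfl

noncomputable instance : StarAddMonoid (MonoidAlgebra R G) where
  star_involutive x := by ext g; simp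
  star_add x y := by ext g; simp [coeff_add]

@[simp]
lemma star_single (g : G) (r : R) : star (single g r) = single g⁻¹ (star r) := by
  ext h
  rw [coeff_star, coeff_single, coeff_single, Finsupp.single_apply, Finsupp.single_apply]
  split_ifs <;> simp_all [inv_eq_iff_eq_inv]

noncomputable instance : StarRing (MonoidAlgebra R G) where
  star_add := star_add
  star_mul x y := by
    induction x using induction_linear with
    | zero => simp
    | add x₁ x₂ h₁ h₂ => simp only [add_mul, star_add, h₁, h₂, mul_add]
    | single g r =>
      induction y using induction_linear with
      | zero => simp
      | add y₁ y₂ h₁ h₂ => simp only [mul_add, star_add, h₁, h₂, add_mul]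
      | single h s => simp [single_mul_single]

instance {R : Type*} [CommSemiring R] [StarRing R] : StarModule R (MonoidAlgebra R G) where
  star_smul r x := by ext g; simp

end Star

section Complex

variable {G : Type*} [Group G]

lemma coeff_mul_star_self_one (x : MonoidAlgebra ℂ G) :
    (x * star x).coeff 1 = ((x.coeff.sum fun _ r => Complex.normSq r : ℝ) : ℂ) := by
  rw [coeff_mul_apply_left, Finsupp.sum, Finsupp.sum, Complex.ofReal_sum]
  refine Finset.sum_congr rfl fun g _ => ?_
  rw [coeff_star, mul_one, inv_inv, Complex.star_def, Complex.mul_conj]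

lemma mul_star_self_eq_zero_iff {x : MonoidAlgebra ℂ G} : x * star x = 0 ↔ x = 0 := by
  refine ⟨fun h => ?_, fun h => by rw [h, zero_mul]⟩
  have hsum := coeff_mul_star_self_one x
  rw [h, coeff_zero, Finsupp.zero_apply, eq_comm, Complex.ofReal_eq_zero, Finsupp.sum,
    Finset.sum_eq_zero_iff_of_nonneg fun g _ => Complex.normSq_nonneg _] at hsum
  ext g
  by_contra hg
  exact hg (Complex.normSq_eq_zero.mp (hsum g (Finsupp.mem_support_iff.mpr hg)))

lemma star_mul_eq_zero_of_mul_eq_zero {c x : MonoidAlgebra ℂ G} (hc : c ∈ Set.center _)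
    (h : c * x = 0) : star c * x = 0 := by
  refine mul_star_self_eq_zero_iff.mp ?_
  calc star c * x * star (star c * x) = star c * (x * star x * c) := by
        simp only [star_mul, star_star, mul_assoc]
    _ = star c * (c * x) * star x := by
        rw [Semigroup.mem_center_iff.mp hc (x * star x)]; simp only [mul_assoc]
    _ = 0 := by rw [h, mul_zero, zero_mul]

lemma eq_zero_of_mem_center_of_mul_self_eq_zero {c : MonoidAlgebra ℂ G} (hc : c ∈ Set.center _)
    (h : c * c = 0) : c = 0 := by
  refine mul_star_self_eq_zero_iff.mp ?_
  rw [← Semigroup.mem_center_iff.mp hc, star_mul_eq_zero_of_mul_eq_zero hc h]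

instance : IsReduced (Subalgebra.center ℂ (MonoidAlgebra ℂ G)) :=
  (isReduced_iff_pow_one_lt 2 one_lt_two).mpr fun c hc => Subtype.ext <|
    eq_zero_of_mem_center_of_mul_self_eq_zero c.2 (by simpa [sq] using congrArg Subtype.val hc)

lemma star_eq_aeval_interpolate {a : MonoidAlgebra ℂ G} (ha : a ∈ Set.center _) {s : Finset ℂ}
    (hs : aeval a (Lagrange.nodal s id) = 0) :
    star a = aeval a (Lagrange.interpolate s id star) := by
  have hne : s.Nonempty := by
    rw [Finset.nonempty_iff_ne_empty]
    rintro rfl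
    simp [Lagrange.nodal_empty] at hs
  have heigen : ∀ i ∈ s, star a * aeval a (Lagrange.basis s id i) =
      algebraMap ℂ _ (star i) * aeval a (Lagrange.basis s id i) := by
    intro i hi
    have hker : (a - algebraMap ℂ _ i) * aeval a (Lagrange.basis s id i) = 0 := by
      obtain ⟨q, hq⟩ := Lagrange.nodal_dvd_X_sub_C_mul_basis (v := id) hi
      simpa [hs] using congrArg (aeval a) hq
    have hc : a - algebraMap ℂ _ i ∈ Subalgebra.center ℂ (MonoidAlgebra ℂ G) :=
      sub_mem ha (Subalgebra.algebraMap_mem _ i)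
    have hker_star := star_mul_eq_zero_of_mul_eq_zero hc hker
    rwa [star_sub, ← algebraMap_star_comm, sub_mul, sub_eq_zero] at hker_star
  calc star a = star a * aeval a (∑ i ∈ s, Lagrange.basis s id i) := by
        rw [Lagrange.sum_basis (Set.injOn_id _) hne, map_one, mul_one]
    _ = ∑ i ∈ s, algebraMap ℂ _ (star i) * aeval a (Lagrange.basis s id i) := by
        rw [map_sum, Finset.mul_sum]
        exact Finset.sum_congr rfl heigen
    _ = aeval a (Lagrange.interpolate s id star) := by
        simp only [Lagrange.interpolate_apply, map_sum, map_mul, aeval_C]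

lemma star_mem_adjoin_singleton [Finite G] {a : MonoidAlgebra ℂ G} (ha : a ∈ Set.center _) :
    star a ∈ Algebra.adjoin ℂ {a} := by
  have : Module.Finite ℂ (MonoidAlgebra ℂ G) := .of_basis (basis G ℂ)
  let b : Subalgebra.center ℂ (MonoidAlgebra ℂ G) := ⟨a, ha⟩
  have hs := aeval_algHom_apply (Subalgebra.center ℂ (MonoidAlgebra ℂ G)).val b (minpoly ℂ b)
  rw [minpoly.aeval, map_zero, minpoly_eq_nodal (IsIntegral.of_finite ℂ b)] at hs
  rw [star_eq_aeval_interpolate ha hs]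
  exact aeval_mem_adjoin_singleton ℂ a

end Complex

end MonoidAlgebra

namespace IsPartitionOf

variable {α : Type*} {S : Set α} {P : Set (Set α)} {p q : Set α}

lemma eq_of_mem_of_mem (h : IsPartitionOf S P) (hp : p ∈ P) (hq : q ∈ P) {a : α} (hap : a ∈ p)
    (haq : a ∈ q) : p = q := by
  obtain ⟨r, -, hr⟩ := h.2.2 a (h.2.1 p hp hap)
  rw [hr p ⟨hp, hap⟩, hr q ⟨hq, haq⟩]

lemma nonempty_of_mem (h : IsPartitionOf S P) (hp : p ∈ P) : p.Nonempty :=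
  Set.nonempty_iff_ne_empty.mpr fun he => h.1 (he ▸ hp)

lemma exists_mem (h : IsPartitionOf S P) {a : α} (ha : a ∈ S) : ∃ p ∈ P, a ∈ p :=
  let ⟨p, hp, _⟩ := h.2.2 a ha
  ⟨p, hp⟩

end IsPartitionOf

section ClassSums

variable {G : Type} [Group G] [Finite G]

lemma coeff_ghat (S : Set G) (g : G) : (ghat S).coeff g = if g ∈ S then 1 else 0 := by
  rw [ghat, finsum_mem_eq_finite_toFinset_sum _ S.toFinite, MonoidAlgebra.coeff_sum,
    Finset.sum_apply']
  simp [MonoidAlgebra.coeff_single, Finsupp.single_apply]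

lemma star_ghat (S : Set G) : star (ghat S) = ghat S⁻¹ := by
  ext g
  simp [coeff_ghat, apply_ite]

variable {𝒦 : Set (Set G)}

lemma coeff_eq_of_mem_span_ghat (h𝒦 : IsPartitionOf Set.univ 𝒦) {x : MonoidAlgebra ℂ G}
    (hx : x ∈ Submodule.span ℂ (ghat '' 𝒦)) {L : Set G} (hL : L ∈ 𝒦) {g h : G} (hg : g ∈ L)
    (hh : h ∈ L) : x.coeff g = x.coeff h := by
  induction hx using Submodule.span_induction with
  | mem y hy =>
    obtain ⟨K, hK, rfl⟩ := hy
    have hgh : g ∈ K ↔ h ∈ K :=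
      ⟨fun hgK => h𝒦.eq_of_mem_of_mem hK hL hgK hg ▸ hh,
        fun hhK => h𝒦.eq_of_mem_of_mem hK hL hhK hh ▸ hg⟩
    simp only [coeff_ghat, hgh]
  | zero => simp
  | add x y _ _ hx hy => simp [MonoidAlgebra.coeff_add, hx, hy]
  | smul c x _ hx => simp [hx]

lemma subset_of_ghat_mem_span (h𝒦 : IsPartitionOf Set.univ 𝒦) {S : Set G}
    (hS : ghat S ∈ Submodule.span ℂ (ghat '' 𝒦)) {L : Set G} (hL : L ∈ 𝒦) {g : G} (hgL : g ∈ L)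
    (hgS : g ∈ S) : L ⊆ S := fun h hh => by
  simpa [coeff_ghat, hgS] using coeff_eq_of_mem_span_ghat h𝒦 hS hL hgL hh

lemma inv_mem_of_ghat_inv_mem_span (h𝒦 : IsPartitionOf Set.univ 𝒦)
    (hinv : ∀ K ∈ 𝒦, ghat K⁻¹ ∈ Submodule.span ℂ (ghat '' 𝒦)) {K : Set G} (hK : K ∈ 𝒦) :
    K⁻¹ ∈ 𝒦 := by
  obtain ⟨k, hk⟩ := h𝒦.nonempty_of_mem hK
  obtain ⟨L, hL, hkL⟩ := h𝒦.exists_mem (Set.mem_univ k⁻¹)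
  have hLK : L ⊆ K⁻¹ := subset_of_ghat_mem_span h𝒦 (hinv K hK) hL hkL (by simpa using hk)
  have hKL : K ⊆ L⁻¹ := subset_of_ghat_mem_span h𝒦 (hinv L hL) hK hk (by simpa using hkL)
  rwa [(Set.inv_subset.mpr hKL).antisymm hLK]

end ClassSums

theorem stmt2_general (G : Type) [Group G] [Finite G]
    (A : Subring (MonoidAlgebra ℂ G))
    (hA : (A : Set (MonoidAlgebra ℂ G)) ⊆ ↑(Subalgebra.center ℂ (MonoidAlgebra ℂ G)))
    (𝒦 : Set (Set G)) (hpart : IsPartitionOf Set.univ 𝒦)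
    (hspan : (A : Set (MonoidAlgebra ℂ G)) =
      ↑(Submodule.span ℂ ((fun K => ghat K) '' 𝒦))) :
    ∀ K ∈ 𝒦, (fun g => g⁻¹) '' K ∈ 𝒦 := by
  set M := Submodule.span ℂ ((fun K => ghat K) '' 𝒦)
  have hmem : ∀ x, x ∈ A ↔ x ∈ M := fun x => Set.ext_iff.mp hspan x
  let B : Subalgebra ℂ (MonoidAlgebra ℂ G) := M.toSubalgebra ((hmem 1).mp A.one_mem)
    fun x y hx hy => (hmem _).mp (A.mul_mem ((hmem x).mpr hx) ((hmem y).mpr hy))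
  have hstar : ∀ x ∈ M, star x ∈ M := fun x hx =>
    Algebra.adjoin_le (S := B) (Set.singleton_subset_iff.mpr hx)
      (MonoidAlgebra.star_mem_adjoin_singleton (hA ((hmem x).mpr hx)))
  intro K hK
  rw [Set.image_inv_eq_inv]
  exact inv_mem_of_ghat_inv_mem_span hpart
    (fun L hL => star_ghat L ▸ hstar _ (Submodule.subset_span ⟨L, hL, rfl⟩)) hK

/-- A subring of `Z(ℂ[G])` having a basis `{K̂ : K ∈ 𝒦}` for a
partition `𝒦` of `G` with `{1} ∈ 𝒦` is automatically a Schur ring: `𝒦` is closed under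
pointwise inversion of parts. -/
theorem stmt2 (G : Type) [Group G] [Finite G]
    (A : Subring (MonoidAlgebra ℂ G))
    (hA : (A : Set (MonoidAlgebra ℂ G)) ⊆ ↑(Subalgebra.center ℂ (MonoidAlgebra ℂ G)))
    (𝒦 : Set (Set G)) (hpart : IsPartitionOf Set.univ 𝒦)
    (hli : LinearIndependent ℂ (fun K : 𝒦 => ghat (K : Set G)))
    (hspan : (A : Set (MonoidAlgebra ℂ G)) =
      ↑(Submodule.span ℂ ((fun K => ghat K) '' 𝒦)))
    (h1 : ({1} : Set G) ∈ 𝒦) :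
    ∀ K ∈ 𝒦, (fun g => g⁻¹) '' K ∈ 𝒦 :=
  stmt2_general G A hA 𝒦 hpart hspan
end

section
/- Let G be a finite group and let 𝒦 and 𝓛 be partitions of the underlying set of G. Then span_ℂ{M̂ : M ∈ 𝒦∨𝓛} = span_ℂ{K̂ : K ∈ 𝒦} ∩ span_ℂ{L̂ : L ∈ 𝓛} inside ℂ[G], where 𝒦∨𝓛 denotes the join of the two partitions in the lattice of partitions of G. -/
open scoped Classical

/-!
An element of `ℂ[G]` lies in the span of the `K̂`, `K ∈ 𝒦`, exactly when its coefficient function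
is constant on every part of `𝒦`. The parts of `𝒦 ∨ 𝓛` are the connected components of the
relation "lying in a common part of `𝒦` or of `𝓛`", so a function is constant on them exactly
when it is constant on the parts of `𝒦` and on those of `𝓛`.
-/

namespace IsPartitionOf

variable {α : Type*} {P : Set (Set α)}

theorem eq_of_mem (hP : IsPartitionOf Set.univ P) {p q : Set α} (hp : p ∈ P) (hq : q ∈ P)
    {x : α} (hxp : x ∈ p) (hxq : x ∈ q) : p = q :=
  (hP.2.2 x trivial).unique ⟨hp, hxp⟩ ⟨hq, hxq⟩

theorem sUnion_eq_univ (hP : IsPartitionOf Set.univ P) : ⋃₀ P = Set.univ :=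
  Set.eq_univ_of_forall fun x => Set.mem_sUnion.2 (hP.2.2 x trivial).exists

end IsPartitionOf

section PartJoin

variable {α β : Type*} (P Q : Set (Set α))

def IsConstOnParts (f : α → β) : Prop :=
  ∀ p ∈ P, ∀ x ∈ p, ∀ y ∈ p, f x = f y

def joinRel (x y : α) : Prop :=
  (∃ p ∈ P, x ∈ p ∧ y ∈ p) ∨ ∃ q ∈ Q, x ∈ q ∧ y ∈ q

instance : Std.Symm (joinRel P Q) where
  symm _ _ := Or.imp (fun ⟨p, hp, hx, hy⟩ => ⟨p, hp, hy, hx⟩) fun ⟨q, hq, hx, hy⟩ => ⟨q, hq, hy, hx⟩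

theorem mem_partJoin_iff {C : Set α} :
    C ∈ PartJoin P Q ↔ ∃ a ∈ ⋃₀ P, C = {b | Relation.ReflTransGen (joinRel P Q) a b} :=
  Iff.rfl

variable {P Q}

theorem eq_of_reflTransGen_joinRel {a x : α} (hax : Relation.ReflTransGen (joinRel P Q) a x) :
    {b | Relation.ReflTransGen (joinRel P Q) a b} = {b | Relation.ReflTransGen (joinRel P Q) x b} :=
  Set.ext fun _ => ⟨(Std.Symm.symm _ _ hax).trans, hax.trans⟩

theorem IsPartitionOf.partJoin (hP : IsPartitionOf Set.univ P) :
    IsPartitionOf Set.univ (PartJoin P Q) := by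
  refine ⟨fun h => ?_, fun _ _ => Set.subset_univ _, fun x _ => ?_⟩
  · obtain ⟨a, -, ha⟩ := (mem_partJoin_iff P Q).1 h
    exact (ha ▸ Relation.ReflTransGen.refl : a ∈ (∅ : Set α))
  · refine ⟨_, ⟨⟨x, hP.sUnion_eq_univ ▸ trivial, rfl⟩, Relation.ReflTransGen.refl⟩, ?_⟩
    rintro C ⟨⟨a, -, rfl⟩, hxC⟩
    exact eq_of_reflTransGen_joinRel hxC

theorem IsConstOnParts.eq_of_reflTransGen {f : α → β} (hP : IsConstOnParts P f)
    (hQ : IsConstOnParts Q f) {x y : α} (h : Relation.ReflTransGen (joinRel P Q) x y) :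
    f x = f y := by
  induction h with
  | refl => rfl
  | tail _ step ih =>
    refine ih.trans ?_
    rcases step with ⟨p, hp, hb, hc⟩ | ⟨q, hq, hb, hc⟩
    exacts [hP p hp _ hb _ hc, hQ q hq _ hb _ hc]

theorem isConstOnParts_partJoin_iff (hP : IsPartitionOf Set.univ P) {f : α → β} :
    IsConstOnParts (PartJoin P Q) f ↔ IsConstOnParts P f ∧ IsConstOnParts Q f := by
  have hx : ∀ x, x ∈ ⋃₀ P := fun x => hP.sUnion_eq_univ ▸ trivial
  constructor
  · intro hf
    refine ⟨fun p hp x hx' y hy => ?_, fun q hq x hx' y hy => ?_⟩ <;>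
      refine hf _ ⟨x, hx x, rfl⟩ x .refl y (.single ?_)
    exacts [.inl ⟨p, hp, hx', hy⟩, .inr ⟨q, hq, hx', hy⟩]
  · rintro ⟨hfP, hfQ⟩ C ⟨a, -, rfl⟩ x hax y hay
    exact hfP.eq_of_reflTransGen hfQ
      ((Std.Symm.symm (r := Relation.ReflTransGen (joinRel P Q)) _ _ hax).trans hay)

end PartJoin

section GroupAlgebra

variable {G : Type} [Group G] [Finite G]

theorem ghat_coeff (K : Set G) (x : G) : (ghat K).coeff x = if x ∈ K then 1 else 0 := by
  have := Fintype.ofFinite G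
  rw [ghat, ← Set.coe_toFinset K, finsum_mem_coe_finset, MonoidAlgebra.coeff_sum,
    Finsupp.finsetSum_apply]
  simp [MonoidAlgebra.coeff_single, Finsupp.single_apply]

theorem isConstOnParts_coeff_ghat {P : Set (Set G)} (hP : IsPartitionOf Set.univ P) {q : Set G}
    (hq : q ∈ P) : IsConstOnParts P (ghat q).coeff := by
  intro p hp x hx y hy
  rw [ghat_coeff, ghat_coeff]
  by_cases hpq : p = q
  · subst hpq
    simp [hx, hy]
  · have hx' : x ∉ q := fun h => hpq (hP.eq_of_mem hp hq hx h)
    have hy' : y ∉ q := fun h => hpq (hP.eq_of_mem hp hq hy h)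
    simp [hx', hy']

theorem eq_sum_smul_ghat_of_isConstOnParts {P : Set (Set G)} (hP : IsPartitionOf Set.univ P)
    (hPfin : P.Finite) {f : MonoidAlgebra ℂ G} (hf : IsConstOnParts P f.coeff) :
    f = ∑ p ∈ hPfin.toFinset,
      (if h : p.Nonempty then f.coeff h.some else 0) • ghat p := by
  ext x
  obtain ⟨p, ⟨hp, hxp⟩, -⟩ := hP.2.2 x trivial
  rw [MonoidAlgebra.coeff_sum, Finsupp.finsetSum_apply,
    Finset.sum_eq_single_of_mem p (hPfin.mem_toFinset.2 hp)]
  · have hne : p.Nonempty := ⟨x, hxp⟩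
    rw [MonoidAlgebra.coeff_smul_apply, ghat_coeff, if_pos hxp, dif_pos hne, smul_eq_mul,
      mul_one]
    exact hf p hp x hxp _ hne.some_mem
  · intro q hq hqp
    have hxq : x ∉ q := fun h => hqp (hP.eq_of_mem (hPfin.mem_toFinset.1 hq) hp h hxp)
    rw [MonoidAlgebra.coeff_smul_apply, ghat_coeff, if_neg hxq, smul_zero]

theorem mem_span_ghat_iff {P : Set (Set G)} (hP : IsPartitionOf Set.univ P)
    {f : MonoidAlgebra ℂ G} :
    f ∈ Submodule.span ℂ ((fun K => ghat K) '' P) ↔ IsConstOnParts P f.coeff := by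
  constructor
  · intro hf
    induction hf using Submodule.span_induction with
    | mem v hv =>
      obtain ⟨q, hq, rfl⟩ := hv
      exact isConstOnParts_coeff_ghat hP hq
    | zero => exact fun _ _ _ _ _ _ => rfl
    | add a b _ _ ha hb =>
      exact fun p hp x hx y hy => congrArg₂ (· + ·) (ha p hp x hx y hy) (hb p hp x hx y hy)
    | smul c a _ ha =>
      exact fun p hp x hx y hy => congrArg (c * ·) (ha p hp x hx y hy)
  · intro hf
    rw [eq_sum_smul_ghat_of_isConstOnParts hP (Set.toFinite P) hf]
    exact Submodule.sum_mem _ fun p hp =>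
      Submodule.smul_mem _ _ (Submodule.subset_span ⟨p, (Set.toFinite P).mem_toFinset.1 hp, rfl⟩)

end GroupAlgebra

/-- Lemma 3.2. For partitions `𝒦, 𝓛` of `G`,
`span{M̂ : M ∈ 𝒦∨𝓛} = span{K̂ : K ∈ 𝒦} ∩ span{L̂ : L ∈ 𝓛}`. -/
theorem stmt4 (G : Type) [Group G] [Finite G] (𝒦 𝓛 : Set (Set G))
    (h𝒦 : IsPartitionOf Set.univ 𝒦) (h𝓛 : IsPartitionOf Set.univ 𝓛) :
    Submodule.span ℂ ((fun K => ghat K) '' PartJoin 𝒦 𝓛) =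
      Submodule.span ℂ ((fun K => ghat K) '' 𝒦) ⊓
        Submodule.span ℂ ((fun K => ghat K) '' 𝓛) := by
  ext f
  rw [Submodule.mem_inf, mem_span_ghat_iff h𝒦.partJoin, mem_span_ghat_iff h𝒦,
    mem_span_ghat_iff h𝓛]
  exact isConstOnParts_partJoin_iff h𝒦
end

section
/- Let H be a subgroup of a finite group G, and fix a supercharacter theory of G. Let φ be a class function of H and θ a superclass function of G (a complex-valued function on G constant on each superclass). Then [φ^{(G)}, θ] = [φ, θ_H], where [·,·] denotes the usual inner product of complex-valued functions on the respective groups and θ_H is the restriction of θ to H. -/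
open scoped Classical

/-! `φ^{(G)}` is `[G:H]` times the superclass average of the zero extension `φ⁰`. Averaging over
the blocks of a partition preserves total sums, and `conj θ` is constant on the blocks, so
`∑_G φ^{(G)} · conj θ = [G:H] ∑_G φ⁰ · conj θ = [G:H] ∑_H φ · conj θ`; and `|G|⁻¹ [G:H] = |H|⁻¹`. -/

theorem Finset.sum_inv_card_mul_sum_blocks {α 𝕜 : Type*} [Fintype α] [Field 𝕜] [CharZero 𝕜]
    (B : α → Finset α) (mem_self : ∀ x, x ∈ B x) (eq_of_mem : ∀ x y, y ∈ B x → B y = B x)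
    (f : α → 𝕜) :
    ∑ x, ((B x).card : 𝕜)⁻¹ * ∑ y ∈ B x, f y = ∑ y, f y := by
  have mem_comm : ∀ x y, y ∈ B x ↔ x ∈ B y := fun x y =>
    ⟨fun h => eq_of_mem x y h ▸ mem_self x, fun h => eq_of_mem y x h ▸ mem_self y⟩
  calc ∑ x, ((B x).card : 𝕜)⁻¹ * ∑ y ∈ B x, f y
      = ∑ x, ∑ y ∈ B x, ((B y).card : 𝕜)⁻¹ * f y := by
        refine Finset.sum_congr rfl fun x _ => ?_
        rw [Finset.mul_sum]
        exact Finset.sum_congr rfl fun y hy => by rw [eq_of_mem x y hy]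
    _ = ∑ y, ∑ x ∈ B y, ((B y).card : 𝕜)⁻¹ * f y :=
        Finset.sum_comm' fun x y => by simp [mem_comm x y]
    _ = ∑ y, f y := by
        refine Finset.sum_congr rfl fun y _ => ?_
        have hcard : ((B y).card : 𝕜) ≠ 0 :=
          Nat.cast_ne_zero.mpr (Finset.card_ne_zero_of_mem (mem_self y))
        rw [Finset.sum_const, nsmul_eq_mul, ← mul_assoc, mul_inv_cancel₀ hcard, one_mul]

section Superclass

variable {G : Type} [Group G] {𝒦 : Set (Set G)}

theorem sclass_eq_of_mem (hpart : IsPartitionOf Set.univ 𝒦) {K : Set G} (hK : K ∈ 𝒦) {x : G}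
    (hx : x ∈ K) : sclass 𝒦 x = K := by
  obtain ⟨K₀, -, huniq⟩ := hpart.2.2 x (Set.mem_univ x)
  ext y
  constructor
  · rintro ⟨K', ⟨hK', hxK'⟩, hyK'⟩
    exact (huniq K' ⟨hK', hxK'⟩).trans (huniq K ⟨hK, hx⟩).symm ▸ hyK'
  · exact fun hy => ⟨K, ⟨hK, hx⟩, hy⟩

theorem mem_sclass_self (hpart : IsPartitionOf Set.univ 𝒦) (x : G) : x ∈ sclass 𝒦 x := by
  obtain ⟨K, ⟨hK, hxK⟩, -⟩ := hpart.2.2 x (Set.mem_univ x)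
  exact ⟨K, ⟨hK, hxK⟩, hxK⟩

theorem sclass_eq_of_mem_sclass (hpart : IsPartitionOf Set.univ 𝒦) {x y : G}
    (hy : y ∈ sclass 𝒦 x) : sclass 𝒦 y = sclass 𝒦 x := by
  obtain ⟨K, ⟨hK, hxK⟩, hyK⟩ := hy
  rw [sclass_eq_of_mem hpart hK hxK, sclass_eq_of_mem hpart hK hyK]

theorem eq_of_mem_sclass {β : Type*} {θ : G → β} (hθ : ∀ K ∈ 𝒦, ∀ x ∈ K, ∀ y ∈ K, θ x = θ y)
    {x y : G} (hy : y ∈ sclass 𝒦 x) : θ y = θ x := by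
  obtain ⟨K, ⟨hK, hxK⟩, hyK⟩ := hy
  exact hθ K hK y hyK x hxK

theorem superInd_mul_of_const_on_sclass (H : Subgroup G) (φ : ↥H → ℂ) {θ : G → ℂ}
    (hθ : ∀ K ∈ 𝒦, ∀ x ∈ K, ∀ y ∈ K, θ x = θ y) (x : G) :
    superInd 𝒦 H φ x * starRingEnd ℂ (θ x) = (H.index : ℂ) * ((sclass 𝒦 x).ncard : ℂ)⁻¹ *
      ∑ᶠ y ∈ sclass 𝒦 x, zeroExtend H φ y * starRingEnd ℂ (θ y) := by
  rw [superInd, mul_assoc _ _ (starRingEnd ℂ _), finsum_mem_mul]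
  exact congrArg _ (finsum_mem_congr rfl fun y hy => by rw [eq_of_mem_sclass hθ hy])

end Superclass

theorem sum_zeroExtend_mul {G : Type} [Group G] [Fintype G] (H : Subgroup G) (φ : ↥H → ℂ)
    (ψ : G → ℂ) : ∑ g, zeroExtend H φ g * ψ g = ∑ h : ↥H, φ h * ψ h := by
  have vanish : ∀ g ∉ H, zeroExtend H φ g * ψ g = 0 := fun g hg => by
    rw [zeroExtend, dif_neg hg, zero_mul]
  rw [← Finset.sum_filter_of_ne fun g _ hne => not_not.mp (mt (vanish g) hne),
    Finset.sum_subtype _ (fun g => by simp) (p := (· ∈ H))]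
  exact Finset.sum_congr rfl fun h _ => by rw [zeroExtend, dif_pos h.2]

theorem sum_superInd_mul_conj {G : Type} [Group G] [Fintype G] {𝒦 : Set (Set G)}
    (hpart : IsPartitionOf Set.univ 𝒦) (H : Subgroup G) (φ : ↥H → ℂ) {θ : G → ℂ}
    (hθ : ∀ K ∈ 𝒦, ∀ x ∈ K, ∀ y ∈ K, θ x = θ y) :
    ∑ x, superInd 𝒦 H φ x * starRingEnd ℂ (θ x) =
      H.index * ∑ h : ↥H, φ h * starRingEnd ℂ (θ h) := by
  simp only [superInd_mul_of_const_on_sclass H φ hθ, mul_assoc, ← Finset.mul_sum,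
    Set.ncard_eq_toFinset_card', finsum_mem_eq_toFinset_sum]
  rw [Finset.sum_inv_card_mul_sum_blocks (fun x => (sclass 𝒦 x).toFinset)
    (fun x => Set.mem_toFinset.mpr (mem_sclass_self hpart x))
    (fun x y hy => by rw [sclass_eq_of_mem_sclass hpart (Set.mem_toFinset.mp hy)]),
    sum_zeroExtend_mul]

theorem stmt9_general (G : Type) [Group G] [Finite G]
    (𝒳 : Set (Set (G → ℂ))) (𝒦 : Set (Set G)) (hSCT : IsSCT G 𝒳 𝒦)
    (H : Subgroup G) (φ : ↥H → ℂ)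
    (θ : G → ℂ) (hθ : ∀ K ∈ 𝒦, ∀ x ∈ K, ∀ y ∈ K, θ x = θ y) :
    cInner G (superInd 𝒦 H φ) θ = cInner ↥H φ (fun h => θ ↑h) := by
  have := Fintype.ofFinite G
  have hH : (Nat.card ↥H : ℂ) ≠ 0 := Nat.cast_ne_zero.mpr Nat.card_pos.ne'
  have hi : (H.index : ℂ) ≠ 0 := Nat.cast_ne_zero.mpr Subgroup.index_ne_zero_of_finite
  simp only [cInner, finsum_eq_sum_of_fintype, sum_superInd_mul_conj hSCT.2.1 H φ hθ,
    ← H.card_mul_index, Nat.cast_mul]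
  field_simp

/-- Frobenius reciprocity for superinduction. For `H ≤ G`, a class
function `φ` of `H`, and a superclass function `θ` of `G`, one has
`[φ^{(G)}, θ] = [φ, θ_H]`. -/
theorem stmt9 (G : Type) [Group G] [Finite G]
    (𝒳 : Set (Set (G → ℂ))) (𝒦 : Set (Set G)) (hSCT : IsSCT G 𝒳 𝒦)
    (H : Subgroup G) (φ : ↥H → ℂ)
    (hφ : ∀ a b : ↥H, φ (b * a * b⁻¹) = φ a)
    (θ : G → ℂ) (hθ : ∀ K ∈ 𝒦, ∀ x ∈ K, ∀ y ∈ K, θ x = θ y) :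
    cInner G (superInd 𝒦 H φ) θ = cInner ↥H φ (fun h => θ ↑h) :=
  stmt9_general G 𝒳 𝒦 hSCT H φ θ hθ
end
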